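/- arXiv:1707.04360 — 2 statements merged into one kernel-verified Lean document; each statement's English description precedes it below -/
import Mathlib

section
/- Let (ξ_k)_{k=1}^∞ be uncorrelated real random variables with E(ξ_k) = 0 and E(ξ_k²) = λ_k, and let (φ_k) be functions in L²(𝒯) with derivatives φ_k^{(1)} ∈ L²(𝒯). Suppose ψ_1, …, ψ_K are the top-K orthonormal eigenfunctions of the covariance operator of X^{(1)} := Σ_k ξ_k φ_k^{(1)} (assumed convergent in L²), with eigenvalues λ_{1,1} ≥ … ≥ λ_{K,1}. Then Σ_{k=1}^K λ_{k,1} ≥ Σ_{k=1}^K λ_k ∫ (φ_k^{(1)}(t))² dt whenever the φ_k^{(1)}/‖φ_k^{(1)}‖ are orthonormal. -/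
/-!
Write `G k = ‖g k‖⁻¹ • g k`. The series form of `A` together with the orthonormality of the `G k`
gives `⟪A (G k), G k⟫ = lam k * ‖g k‖ ^ 2`, so the left-hand side is the trace of `A` compressed to
the span of `G 0, …, G (K-1)`. Expanding each term in the eigenbasis `e` turns this trace into
`∑' j, lam1 j * d j` with weights `d j = ∑ k < K, ⟪e j, G k⟫ ^ 2`; by Bessel's inequality (once for
the `G k`, once for `e`) these satisfy `0 ≤ d j ≤ 1` and `∑' j, d j ≤ K`, and such a weighted sum of
a nonincreasing nonnegative sequence is at most the sum of its first `K` terms (Ky Fan).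
-/

open MeasureTheory
open scoped RealInnerProductSpace

theorem Antitone.tsum_mul_le_sum_range {lam d : ℕ → ℝ} (hlam : Antitone lam)
    (hlam0 : ∀ j, 0 ≤ lam j) (hd0 : ∀ j, 0 ≤ d j) (hd1 : ∀ j, d j ≤ 1) (hd : Summable d) {K : ℕ} (hdK : ∑' j, d j ≤ K) :
    ∑' j, lam j * d j ≤ ∑ j ∈ Finset.range K, lam j := by
  set r : ℕ → ℝ := (Finset.range K : Set ℕ).indicator fun j => lam j - lam K
  have hr : HasSum r (∑ j ∈ Finset.range K, (lam j - lam K)) := by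
    rw [← Finset.sum_indicator_subset _ subset_rfl]
    exact hasSum_sum_of_ne_finset_zero fun j hj => Set.indicator_of_notMem hj _
  -- `lam j - lam K` is nonnegative for `j < K`, where `d j ≤ 1`, and nonpositive afterwards.
  have hle : ∀ j, lam j * d j ≤ r j + lam K * d j := by
    intro j
    by_cases hj : j < K
    · have : r j = lam j - lam K := Set.indicator_of_mem (Finset.mem_range.2 hj) _
      nlinarith [hlam hj.le, hd1 j]
    · have : r j = 0 := Set.indicator_of_notMem (by simpa using hj) _
      nlinarith [hlam (not_lt.1 hj), hd0 j]
  have hsum : Summable fun j => lam j * d j :=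
    .of_nonneg_of_le (fun j => mul_nonneg (hlam0 j) (hd0 j))
      (fun j => mul_le_mul_of_nonneg_right (hlam (Nat.zero_le j)) (hd0 j)) (hd.mul_left (lam 0))
  calc ∑' j, lam j * d j ≤ ∑' j, (r j + lam K * d j) :=
        hsum.tsum_le_tsum hle (hr.summable.add (hd.mul_left _))
    _ = ∑ j ∈ Finset.range K, (lam j - lam K) + lam K * ∑' j, d j := by
        rw [hr.summable.tsum_add (hd.mul_left _), hr.tsum_eq, tsum_mul_left]
    _ ≤ ∑ j ∈ Finset.range K, (lam j - lam K) + lam K * K := by gcongr; exact hlam0 K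
    _ = ∑ j ∈ Finset.range K, lam j := by simp [Finset.sum_sub_distrib, mul_comm]

section KyFan

variable {H : Type*} [NormedAddCommGroup H] [InnerProductSpace ℝ H]
  {A : H →L[ℝ] H} {lam : ℕ → ℝ} {e : ℕ → H}

theorem hasSum_inner_apply_self_of_hasSum
    (hA : ∀ x, HasSum (fun k => (lam k * ⟪e k, x⟫) • e k) (A x)) (x : H) :
    HasSum (fun k => lam k * ⟪e k, x⟫ ^ 2) ⟪A x, x⟫ := by
  simpa only [innerSL_apply_apply, real_inner_smul_right, real_inner_comm x, sq, mul_assoc] using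
    (hA x).mapL (innerSL ℝ x)

theorem sum_inner_apply_self_le_sum_range
    (hA : ∀ x, HasSum (fun k => (lam k * ⟪e k, x⟫) • e k) (A x))
    (hlam : Antitone lam) (hlam0 : ∀ k, 0 ≤ lam k) (he : Orthonormal ℝ e)
    {ι : Type*} {v : ι → H} (hv : Orthonormal ℝ v) (s : Finset ι) :
    ∑ i ∈ s, ⟪A (v i), v i⟫ ≤ ∑ k ∈ Finset.range s.card, lam k := by
  set d : ℕ → ℝ := fun k => ∑ i ∈ s, ⟪e k, v i⟫ ^ 2
  have hsq : ∀ x : H, Summable fun k => ⟪e k, x⟫ ^ 2 := fun x => by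
    simpa [Real.norm_eq_abs, sq_abs] using he.inner_products_summable x
  have hd1 : ∀ k, d k ≤ 1 := fun k => by
    simpa [Real.norm_eq_abs, sq_abs, real_inner_comm, he.1 k] using
      hv.sum_inner_products_le (s := s) (e k)
  have hdcard : ∑' k, d k ≤ s.card := by
    rw [Summable.tsum_finsetSum fun i _ => hsq (v i), ← nsmul_one, ← Finset.sum_const]
    refine Finset.sum_le_sum fun i _ => ?_
    simpa [Real.norm_eq_abs, sq_abs, hv.1 i] using he.tsum_inner_products_le (v i)
  calc ∑ i ∈ s, ⟪A (v i), v i⟫ = ∑' k, lam k * d k := by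
        simp_rw [d, Finset.mul_sum]
        exact (hasSum_sum fun i _ => hasSum_inner_apply_self_of_hasSum hA (v i)).tsum_eq.symm
    _ ≤ _ := hlam.tsum_mul_le_sum_range hlam0 (fun k => by positivity) hd1
        (summable_sum fun i _ => hsq (v i)) hdcard

end KyFan

theorem inner_apply_inv_norm_smul_self {H : Type*} [NormedAddCommGroup H]
    [InnerProductSpace ℝ H] {A : H →L[ℝ] H} {lam : ℕ → ℝ} {g : ℕ → H}
    (hA : ∀ u v, ⟪A u, v⟫ = ∑' j, lam j * ⟪g j, u⟫ * ⟪g j, v⟫)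
    (hg : Orthonormal ℝ fun k => ‖g k‖⁻¹ • g k) (k : ℕ) :
    ⟪A (‖g k‖⁻¹ • g k), ‖g k‖⁻¹ • g k⟫ = lam k * ‖g k‖ ^ 2 := by
  classical
  have hinner : ∀ j, ⟪g j, ‖g k‖⁻¹ • g k⟫ = if j = k then ‖g k‖ else 0 := fun j => by
    have hgj : g j ≠ 0 := fun h => hg.ne_zero j (by simp [h])
    conv_lhs => rw [← smul_inv_smul₀ (norm_ne_zero_iff.2 hgj) (g j)]
    rw [real_inner_smul_left, orthonormal_iff_ite.1 hg]
    split_ifs with hjk <;> simp [hjk]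
  rw [hA, tsum_eq_single k fun j hjk => by simp [hinner, hjk]]
  simp only [hinner, if_true]
  ring

theorem dpca_variance_dominates_general {H : Type*} [NormedAddCommGroup H] [InnerProductSpace ℝ H]
    (lam : ℕ → ℝ)
    (g : ℕ → H)  -- g k is the derivative φ_k⁽¹⁾, as an element of L²(𝒯)
    (A : H →L[ℝ] H)
    (hAser : ∀ u v : H, ⟪A u, v⟫ = ∑' j, lam j * ⟪g j, u⟫ * ⟪g j, v⟫)
    (lam1 : ℕ → ℝ) (hanti : Antitone lam1) (hpos1 : ∀ k, 0 ≤ lam1 k)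
    (e : ℕ → H) (he : Orthonormal ℝ e)
    (hspec : ∀ x : H, HasSum (fun k => (lam1 k * ⟪e k, x⟫) • e k) (A x))
    (hON : Orthonormal ℝ (fun k => ‖g k‖⁻¹ • g k))
    (K : ℕ) :
    ∑ k ∈ Finset.range K, lam k * ‖g k‖ ^ 2 ≤ ∑ k ∈ Finset.range K, lam1 k := by
  calc ∑ k ∈ Finset.range K, lam k * ‖g k‖ ^ 2
      = ∑ k ∈ Finset.range K, ⟪A (‖g k‖⁻¹ • g k), ‖g k‖⁻¹ • g k⟫ := by
        simp only [inner_apply_inv_norm_smul_self hAser hON]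
    _ ≤ ∑ k ∈ Finset.range (Finset.range K).card, lam1 k :=
        sum_inner_apply_self_le_sum_range hspec hanti hpos1 he hON _
    _ = ∑ k ∈ Finset.range K, lam1 k := by rw [Finset.card_range]

/-- Inequality (2.8) of the paper: the top-K eigenvalues `λ_{k,1}` of the covariance
operator `A` of the derivative process `X⁽¹⁾ = Σ_k ξ_k φ_k⁽¹⁾` dominate the variances
`λ_k ‖φ_k⁽¹⁾‖²` captured by the (normalized, assumed orthonormal) eigenfunction
derivatives `g k = φ_k⁽¹⁾`. -/
theorem dpca_variance_dominates {H : Type*} [NormedAddCommGroup H] [InnerProductSpace ℝ H]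
    [CompleteSpace H] {Ω : Type*} [MeasurableSpace Ω]
    (P : Measure Ω) [IsProbabilityMeasure P]
    (ξ : ℕ → Ω → ℝ) (lam : ℕ → ℝ)
    (hmean : ∀ k, ∫ ω, ξ k ω ∂P = 0)
    (hcov : ∀ j k, ∫ ω, ξ j ω * ξ k ω ∂P = if j = k then lam j else 0)
    (g : ℕ → H)  -- g k is the derivative φ_k⁽¹⁾, as an element of L²(𝒯)
    (X1 : Ω → H)
    (hX1 : ∀ᵐ ω ∂P, HasSum (fun k => ξ k ω • g k) (X1 ω))
    (A : H →L[ℝ] H)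
    (hAcov : ∀ u v : H, ⟪A u, v⟫ = ∫ ω, ⟪X1 ω, u⟫ * ⟪X1 ω, v⟫ ∂P)
    (hAser : ∀ u v : H, ⟪A u, v⟫ = ∑' j, lam j * ⟪g j, u⟫ * ⟪g j, v⟫)
    (lam1 : ℕ → ℝ) (hanti : Antitone lam1) (hpos1 : ∀ k, 0 ≤ lam1 k)
    (e : ℕ → H) (he : Orthonormal ℝ e)
    (hspec : ∀ x : H, HasSum (fun k => (lam1 k * ⟪e k, x⟫) • e k) (A x))
    (hON : Orthonormal ℝ (fun k => ‖g k‖⁻¹ • g k))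
    (K : ℕ) :
    ∑ k ∈ Finset.range K, lam k * ‖g k‖ ^ 2 ≤ ∑ k ∈ Finset.range K, lam1 k :=
  dpca_variance_dominates_general lam g A hAser lam1 hanti hpos1 e he hspec hON K
end

section
/- Let X be a mean-square continuously differentiable process on compact 𝒯 with mean μ and covariance G, such that the mixed partial derivative G^{(1,0)}(s,t) = ∂G(s,t)/∂s exists and is continuous. Let φ ∈ L²(𝒯) and define ξ = ∫_𝒯 (X^{(1)}(s) − μ'(s)) φ(s) ds. Then for any t ∈ 𝒯, Cov(ξ, X(t)) = ∫_𝒯 G^{(1,0)}(s, t) φ(s) ds. -/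
/-!
Regard `X` and `X1` as curves in `L²(P)`. Uniform mean-square convergence of the difference
quotients makes `X1` the derivative of `X` in `L²`, and forces `X1` to be continuous, hence bounded,
on `[a, b]`. Composing with the continuous linear functionals `Z ↦ E[Z (X t - μ t)]` and `Z ↦ E[Z]`
identifies `G10 s t = E[X1 s (X t - μ t)]` and `μ' s = E[X1 s]`. The bound makes
`(s, ω) ↦ (X1 s ω - μ' s) φ s (X t ω - μ t)` integrable on `[a, b] × Ω`, and Fubini finishes.
-/

open MeasureTheory Set Function

section UniformDeriv

variable {E : Type*} [NormedAddCommGroup E] [NormedSpace ℝ E]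

def HasUniformDerivWithinOn (x x' : ℝ → E) (T : Set ℝ) : Prop :=
  ∀ ε > 0, ∃ δ > 0, ∀ s ∈ T, ∀ u ∈ T, u ≠ s → |u - s| < δ → ‖slope x s u - x' s‖ ≤ ε

variable {x x' : ℝ → E} {T : Set ℝ}

theorem HasUniformDerivWithinOn.hasDerivWithinAt (h : HasUniformDerivWithinOn x x' T) {s : ℝ}
    (hs : s ∈ T) : HasDerivWithinAt x (x' s) T s := by
  rw [hasDerivWithinAt_iff_tendsto_slope, Metric.tendsto_nhdsWithin_nhds]
  intro ε hε
  obtain ⟨δ, hδ, hslope⟩ := h (ε / 2) (half_pos hε)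
  refine ⟨δ, hδ, fun u hu hus => ?_⟩
  rw [dist_eq_norm]
  exact (hslope s hs u hu.1 hu.2 (by rwa [← Real.dist_eq])).trans_lt (half_lt_self hε)

/-- The slope between `s` and `u` approximates both `x' s` and `x' u`. -/
theorem HasUniformDerivWithinOn.continuousOn (h : HasUniformDerivWithinOn x x' T) :
    ContinuousOn x' T := by
  refine Metric.continuousOn_iff.2 fun s hs ε hε => ?_
  obtain ⟨δ, hδ, hslope⟩ := h (ε / 3) (by positivity)
  refine ⟨δ, hδ, fun u hu hus => ?_⟩
  rcases eq_or_ne u s with rfl | hne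
  · simpa using hε
  rw [Real.dist_eq] at hus
  calc dist (x' u) (x' s) ≤ dist (x' u) (slope x s u) + dist (x' s) (slope x s u) :=
        dist_triangle_right _ _ _
    _ = ‖slope x u s - x' u‖ + ‖slope x s u - x' s‖ := by
        rw [dist_comm, dist_comm (x' s), dist_eq_norm, dist_eq_norm, slope_comm]
    _ ≤ ε / 3 + ε / 3 :=
        add_le_add (hslope u hu s hs hne.symm (by rwa [abs_sub_comm])) (hslope s hs u hu hne hus)
    _ < ε := by linarith

end UniformDeriv

section L2

variable {Ω : Type*} [MeasurableSpace Ω] {P : Measure Ω}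

theorem inner_eq_integral_mul_of_ae_eq {F G : Lp ℝ 2 P} {f g : Ω → ℝ} (hF : F =ᵐ[P] f)
    (hG : G =ᵐ[P] g) : inner ℝ F G = ∫ ω, f ω * g ω ∂P := by
  rw [L2.inner_def]
  refine integral_congr_ae ?_
  filter_upwards [hF, hG] with ω hFω hGω
  simp [hFω, hGω, mul_comm]

theorem norm_sq_eq_integral_sq_of_ae_eq {F : Lp ℝ 2 P} {f : Ω → ℝ} (hF : F =ᵐ[P] f) :
    ‖F‖ ^ 2 = ∫ ω, f ω ^ 2 ∂P := by
  simp_rw [← real_inner_self_eq_norm_sq, inner_eq_integral_mul_of_ae_eq hF hF, sq]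

open Classical in
noncomputable def lpCurve (T : Set ℝ) (X : ℝ → Ω → ℝ) (hX : ∀ t ∈ T, MemLp (X t) 2 P) (t : ℝ) :
    Lp ℝ 2 P :=
  if ht : t ∈ T then (hX t ht).toLp (X t) else 0

variable {T : Set ℝ} {X X1 : ℝ → Ω → ℝ} {hX : ∀ t ∈ T, MemLp (X t) 2 P}
  {hX1 : ∀ t ∈ T, MemLp (X1 t) 2 P}

theorem lpCurve_ae_eq {t : ℝ} (ht : t ∈ T) : lpCurve T X hX t =ᵐ[P] X t := by
  rw [lpCurve, dif_pos ht]
  exact MemLp.coeFn_toLp _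

theorem hasUniformDerivWithinOn_lpCurve
    (hms : ∀ ε > 0, ∃ δ > 0, ∀ t ∈ T, ∀ h : ℝ, h ≠ 0 → |h| < δ → t + h ∈ T →
      ∫ ω, ((X (t + h) ω - X t ω) / h - X1 t ω) ^ 2 ∂P ≤ ε) :
    HasUniformDerivWithinOn (lpCurve T X hX) (lpCurve T X1 hX1) T := by
  intro ε hε
  obtain ⟨δ, hδ, hquot⟩ := hms (ε ^ 2) (by positivity)
  refine ⟨δ, hδ, fun s hs u hu hne hlt => ?_⟩
  have hae : slope (lpCurve T X hX) s u - lpCurve T X1 hX1 s =ᵐ[P]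
      fun ω => (X (s + (u - s)) ω - X s ω) / (u - s) - X1 s ω := by
    rw [slope_def_module]
    filter_upwards [Lp.coeFn_sub ((u - s)⁻¹ • (lpCurve T X hX u - lpCurve T X hX s))
      (lpCurve T X1 hX1 s), Lp.coeFn_smul (u - s)⁻¹ (lpCurve T X hX u - lpCurve T X hX s),
      Lp.coeFn_sub (lpCurve T X hX u) (lpCurve T X hX s), lpCurve_ae_eq (hX := hX) hu,
      lpCurve_ae_eq (hX := hX) hs, lpCurve_ae_eq (hX := hX1) hs] with ω h₁ h₂ h₃ h₄ h₅ h₆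
    simp only [h₁, h₂, h₃, h₄, h₅, h₆, Pi.sub_apply, Pi.smul_apply, smul_eq_mul,
      add_sub_cancel, div_eq_inv_mul]
  have hsq := hquot s hs (u - s) (sub_ne_zero.2 hne) hlt (by rwa [add_sub_cancel])
  rw [← norm_sq_eq_integral_sq_of_ae_eq hae] at hsq
  exact (pow_le_pow_iff_left₀ (norm_nonneg _) hε.le two_ne_zero).1 hsq

theorem HasUniformDerivWithinOn.hasDerivWithinAt_integral_mul
    (h : HasUniformDerivWithinOn (lpCurve T X hX) (lpCurve T X1 hX1) T) {g : Ω → ℝ}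
    (hg : MemLp g 2 P) {s : ℝ} (hs : s ∈ T) :
    HasDerivWithinAt (fun u => ∫ ω, X u ω * g ω ∂P) (∫ ω, X1 s ω * g ω ∂P) T s := by
  have hd := (h.hasDerivWithinAt hs).inner ℝ (hasDerivWithinAt_const s T (hg.toLp g))
  rw [inner_zero_right, zero_add, inner_eq_integral_mul_of_ae_eq (lpCurve_ae_eq hs)
    hg.coeFn_toLp] at hd
  exact hd.congr (fun u hu => (inner_eq_integral_mul_of_ae_eq (lpCurve_ae_eq hu)
    hg.coeFn_toLp).symm) (inner_eq_integral_mul_of_ae_eq (lpCurve_ae_eq hs) hg.coeFn_toLp).symm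

theorem IsCompact.exists_integral_sq_le (hT : IsCompact T)
    (hc : ContinuousOn (lpCurve T X1 hX1) T) : ∃ C, ∀ s ∈ T, ∫ ω, X1 s ω ^ 2 ∂P ≤ C := by
  obtain ⟨M, hM⟩ := hT.exists_bound_of_continuousOn hc
  refine ⟨M ^ 2, fun s hs => ?_⟩
  rw [← norm_sq_eq_integral_sq_of_ae_eq (lpCurve_ae_eq hs)]
  exact pow_le_pow_left₀ (norm_nonneg _) (hM s hs) 2

end L2

section Fubini

variable {Ω α : Type*} [MeasurableSpace Ω] [MeasurableSpace α] {P : Measure Ω} {ν : Measure α}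

theorem integral_abs_mul_le_of_memLp_two {f g : Ω → ℝ} (hf : MemLp f 2 P) (hg : MemLp g 2 P) :
    ∫ ω, |f ω * g ω| ∂P ≤ (∫ ω, f ω ^ 2 ∂P + ∫ ω, g ω ^ 2 ∂P) / 2 := by
  rw [← integral_add hf.integrable_sq hg.integrable_sq, ← integral_div]
  refine integral_mono (hf.integrable_mul hg).abs
    ((hf.integrable_sq.add hg.integrable_sq).div_const 2) fun ω => ?_
  have := two_mul_le_add_sq |f ω| |g ω|
  simp only [abs_mul, sq_abs] at this ⊢
  linarith

theorem integral_integral_mul_swap [SFinite ν] [SFinite P] {F : α → Ω → ℝ} {φ : α → ℝ}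
    {g : Ω → ℝ} {C : ℝ} (hF : AEStronglyMeasurable (uncurry F) (ν.prod P))
    (hF2 : ∀ᵐ s ∂ν, MemLp (F s) 2 P ∧ ∫ ω, F s ω ^ 2 ∂P ≤ C) (hφ : Integrable φ ν)
    (hg : MemLp g 2 P) :
    ∫ ω, (∫ s, F s ω * φ s ∂ν) * g ω ∂P = ∫ s, (∫ ω, F s ω * g ω ∂P) * φ s ∂ν := by
  have hmeas : AEStronglyMeasurable (uncurry fun s ω => F s ω * φ s * g ω) (ν.prod P) :=
    (hF.mul hφ.1.comp_fst).mul hg.1.comp_snd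
  have hint : Integrable (uncurry fun s ω => F s ω * φ s * g ω) (ν.prod P) := by
    refine (integrable_prod_iff hmeas).2 ⟨?_, ?_⟩
    · filter_upwards [hF2] with s hs
      simpa only [uncurry_apply_pair, Pi.mul_apply, mul_right_comm _ (φ s)] using
        (hs.1.integrable_mul hg).mul_const (φ s)
    · refine (hφ.norm.mul_const ((C + ∫ ω, g ω ^ 2 ∂P) / 2)).mono'
        hmeas.norm.integral_prod_right' ?_
      filter_upwards [hF2] with s hs
      have hnorm : ∫ ω, ‖F s ω * φ s * g ω‖ ∂P = (∫ ω, |F s ω * g ω| ∂P) * ‖φ s‖ := by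
        rw [← integral_mul_const]
        congr 1 with ω
        rw [Real.norm_eq_abs, Real.norm_eq_abs, mul_right_comm, abs_mul]
      rw [uncurry_def, Real.norm_of_nonneg (integral_nonneg fun _ => norm_nonneg _), hnorm,
        mul_comm]
      gcongr
      exact (integral_abs_mul_le_of_memLp_two hs.1 hg).trans (by linarith [hs.2])
  calc ∫ ω, (∫ s, F s ω * φ s ∂ν) * g ω ∂P
      = ∫ ω, ∫ s, F s ω * φ s * g ω ∂ν ∂P := by simp_rw [← integral_mul_const]
    _ = ∫ s, ∫ ω, F s ω * φ s * g ω ∂P ∂ν := (integral_integral_swap hint).symm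
    _ = ∫ s, (∫ ω, F s ω * g ω ∂P) * φ s ∂ν := by
        simp_rw [← integral_mul_const, mul_right_comm _ (φ _)]

theorem Measurable.aestronglyMeasurable_uncurry_sub [SFinite P] {Z : α → Ω → ℝ} {m : α → ℝ}
    (hZ : Measurable (uncurry Z)) (hm : m =ᵐ[ν] fun s => ∫ ω, Z s ω ∂P) :
    AEStronglyMeasurable (uncurry fun s ω => Z s ω - m s) (ν.prod P) := by
  have hmean : AEStronglyMeasurable m ν :=
    (hZ.stronglyMeasurable.integral_prod_right' (ν := P)).aestronglyMeasurable.congr hm.symm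
  exact hZ.aestronglyMeasurable.sub hmean.comp_fst

end Fubini

section Centering

variable {Ω : Type*} [MeasurableSpace Ω] {P : Measure Ω}

theorem integral_sub_const_mul_sub_integral [IsProbabilityMeasure P] {f g : Ω → ℝ}
    (hf : MemLp f 2 P) (hg : MemLp g 2 P) (c : ℝ) :
    ∫ ω, (f ω - c) * (g ω - ∫ ω', g ω' ∂P) ∂P = ∫ ω, f ω * (g ω - ∫ ω', g ω' ∂P) ∂P := by
  have hg' : MemLp (fun ω => g ω - ∫ ω', g ω' ∂P) 2 P := hg.sub (memLp_const _)
  have hg0 : ∫ ω, (g ω - ∫ ω', g ω' ∂P) ∂P = 0 := by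
    rw [integral_sub (hg.integrable one_le_two) (integrable_const _)]
    simp
  have hfg : Integrable (fun ω => f ω * (g ω - ∫ ω', g ω' ∂P)) P := hf.integrable_mul hg'
  simp_rw [sub_mul _ c]
  rw [integral_sub hfg ((hg'.integrable one_le_two).const_mul c),
    integral_const_mul, hg0, mul_zero, sub_zero]

theorem integral_sub_integral_sq_le [IsProbabilityMeasure P] {f : Ω → ℝ}
    (hf : AEStronglyMeasurable f P) : ∫ ω, (f ω - ∫ ω', f ω' ∂P) ^ 2 ∂P ≤ ∫ ω, f ω ^ 2 ∂P := by
  rw [← ProbabilityTheory.variance_eq_integral hf.aemeasurable]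
  exact ProbabilityTheory.variance_le_expectation_sq hf

end Centering

theorem dpc_score_covariance_general {Ω : Type*} [MeasurableSpace Ω]
    (P : Measure Ω) [IsProbabilityMeasure P]
    (a b : ℝ)
    (X X1 : ℝ → Ω → ℝ)
    (hL2 : ∀ t ∈ Set.Icc a b, MemLp (X t) 2 P)
    (hL2' : ∀ t ∈ Set.Icc a b, MemLp (X1 t) 2 P)
    (hjm : Measurable fun p : ℝ × Ω => X1 p.1 p.2)
    -- mean-square convergence of the difference quotients, uniform in t
    (hms : ∀ ε > 0, ∃ δ > 0, ∀ t ∈ Set.Icc a b, ∀ h : ℝ, h ≠ 0 → |h| < δ →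
      t + h ∈ Set.Icc a b →
      ∫ ω, ((X (t + h) ω - X t ω) / h - X1 t ω) ^ 2 ∂P ≤ ε)
    (μ μ' : ℝ → ℝ) (hμ : ∀ t, μ t = ∫ ω, X t ω ∂P)
    (hμ' : ∀ t ∈ Set.Icc a b, HasDerivWithinAt μ (μ' t) (Set.Icc a b) t)
    (G G10 : ℝ → ℝ → ℝ)
    (hG : ∀ s t, G s t = ∫ ω, (X s ω - μ s) * (X t ω - μ t) ∂P)
    (hG10 : ∀ t ∈ Set.Icc a b, ∀ s ∈ Set.Icc a b,
      HasDerivWithinAt (fun u => G u t) (G10 s t) (Set.Icc a b) s)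
    (φ : ℝ → ℝ) (hφ : MemLp φ 2 (volume.restrict (Set.Icc a b)))
    (ξ : Ω → ℝ)
    (hξ : ∀ ω, ξ ω = ∫ s in Set.Icc a b, (X1 s ω - μ' s) * φ s) :
    ∀ t ∈ Set.Icc a b,
      ∫ ω, ξ ω * (X t ω - μ t) ∂P = ∫ s in Set.Icc a b, G10 s t * φ s := by
  intro t ht
  obtain rfl | hab := (ht.1.trans ht.2).eq_or_lt
  · simp [hξ]
  have hX := hasUniformDerivWithinOn_lpCurve (hX := hL2) (hX1 := hL2') hms
  have hY : MemLp (fun ω => X t ω - μ t) 2 P := (hL2 t ht).sub (memLp_const _)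
  have hcov : ∀ {Z : Ω → ℝ}, MemLp Z 2 P → ∀ c, ∫ ω, (Z ω - c) * (X t ω - μ t) ∂P
      = ∫ ω, Z ω * (X t ω - μ t) ∂P := fun hZ c => by
    rw [hμ]
    exact integral_sub_const_mul_sub_integral hZ (hL2 t ht) c
  have hμ'_eq : ∀ s ∈ Icc a b, μ' s = ∫ ω, X1 s ω ∂P := fun s hs =>
    (uniqueDiffOn_Icc hab s hs).eq_deriv _ (hμ' s hs) <| by
      simpa [← hμ] using hX.hasDerivWithinAt_integral_mul (memLp_const 1) hs
  have hG10_eq : ∀ s ∈ Icc a b, G10 s t = ∫ ω, X1 s ω * (X t ω - μ t) ∂P := fun s hs =>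
    (uniqueDiffOn_Icc hab s hs).eq_deriv _ (hG10 t ht s hs) <|
      (hX.hasDerivWithinAt_integral_mul hY hs).congr (fun u hu => by rw [hG, hcov (hL2 u hu)])
        (by rw [hG, hcov (hL2 s hs)])
  obtain ⟨C, hC⟩ := isCompact_Icc.exists_integral_sq_le hX.continuousOn
  have hF2 : ∀ᵐ s ∂volume.restrict (Icc a b), MemLp (fun ω => X1 s ω - μ' s) 2 P ∧
      ∫ ω, (X1 s ω - μ' s) ^ 2 ∂P ≤ C := ae_restrict_of_forall_mem measurableSet_Icc fun s hs =>
    ⟨(hL2' s hs).sub (memLp_const _), hμ'_eq s hs ▸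
      (integral_sub_integral_sq_le (hL2' s hs).1).trans (hC s hs)⟩
  calc ∫ ω, ξ ω * (X t ω - μ t) ∂P
      = ∫ ω, (∫ s in Icc a b, (X1 s ω - μ' s) * φ s) * (X t ω - μ t) ∂P := by simp_rw [hξ]
    _ = ∫ s in Icc a b, (∫ ω, (X1 s ω - μ' s) * (X t ω - μ t) ∂P) * φ s :=
        integral_integral_mul_swap (hjm.aestronglyMeasurable_uncurry_sub
          (ae_restrict_of_forall_mem measurableSet_Icc hμ'_eq)) hF2 (hφ.integrable one_le_two) hY
    _ = ∫ s in Icc a b, G10 s t * φ s :=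
        setIntegral_congr_fun measurableSet_Icc fun s hs => by rw [hcov (hL2' s hs), hG10_eq s hs]

/-- Covariance computation (2.12): for a mean-square continuously differentiable process
`X` with mean `μ`, covariance `G`, and continuous partial derivative `G⁽¹⁰⁾`, the score
`ξ = ∫ (X⁽¹⁾(s) − μ'(s)) φ(s) ds` satisfies
`Cov(ξ, X(t)) = ∫ G⁽¹⁰⁾(s,t) φ(s) ds`. -/
theorem dpc_score_covariance {Ω : Type*} [MeasurableSpace Ω]
    (P : Measure Ω) [IsProbabilityMeasure P]
    (a b : ℝ) (hab : a ≤ b)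
    (X X1 : ℝ → Ω → ℝ)
    (hL2 : ∀ t ∈ Set.Icc a b, MemLp (X t) 2 P)
    (hL2' : ∀ t ∈ Set.Icc a b, MemLp (X1 t) 2 P)
    (hjm : Measurable fun p : ℝ × Ω => X1 p.1 p.2)
    (hpath : ∀ ω, ∀ t ∈ Set.Icc a b,
      HasDerivWithinAt (fun s => X s ω) (X1 t ω) (Set.Icc a b) t)
    -- mean-square convergence of the difference quotients, uniform in t
    (hms : ∀ ε > 0, ∃ δ > 0, ∀ t ∈ Set.Icc a b, ∀ h : ℝ, h ≠ 0 → |h| < δ →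
      t + h ∈ Set.Icc a b →
      ∫ ω, ((X (t + h) ω - X t ω) / h - X1 t ω) ^ 2 ∂P ≤ ε)
    (μ μ' : ℝ → ℝ) (hμ : ∀ t, μ t = ∫ ω, X t ω ∂P)
    (hμ' : ∀ t ∈ Set.Icc a b, HasDerivWithinAt μ (μ' t) (Set.Icc a b) t)
    (G G10 : ℝ → ℝ → ℝ)
    (hG : ∀ s t, G s t = ∫ ω, (X s ω - μ s) * (X t ω - μ t) ∂P)
    (hG10 : ∀ t ∈ Set.Icc a b, ∀ s ∈ Set.Icc a b,
      HasDerivWithinAt (fun u => G u t) (G10 s t) (Set.Icc a b) s)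
    (hG10cont : ContinuousOn (fun p : ℝ × ℝ => G10 p.1 p.2)
      (Set.Icc a b ×ˢ Set.Icc a b))
    (φ : ℝ → ℝ) (hφ : MemLp φ 2 (volume.restrict (Set.Icc a b)))
    (ξ : Ω → ℝ)
    (hξ : ∀ ω, ξ ω = ∫ s in Set.Icc a b, (X1 s ω - μ' s) * φ s) :
    ∀ t ∈ Set.Icc a b,
      ∫ ω, ξ ω * (X t ω - μ t) ∂P = ∫ s in Set.Icc a b, G10 s t * φ s :=
  dpc_score_covariance_general P a b X X1 hL2 hL2' hjm hms μ μ' hμ hμ' G G10 hG hG10 φ hφ ξ hξ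
end
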